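/- arXiv:1912.01066 — 3 statements merged into one kernel-verified Lean document; each statement's English description precedes it below -/
import Mathlib

section
/- Let K have characteristic zero and let M be the K[x_1,x_2]-submodule of the free module K[x_1,x_2]·u_1 ⊕ K[x_1,x_2]·u_2 consisting of elements w = u_1 p_1 + u_2 p_2 with x_1 p_1 + x_2 p_2 = 0 that are invariant under the involution swapping (u_1, x_1) with (u_2, x_2). Then M is generated as a module over the ring of symmetric polynomials K[x_1,x_2]^{S_2} by the single element (u_1 x_2 − u_2 x_1)(x_1 − x_2). -/
noncomputable section
open MvPolynomial

section Stmt9Aux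

variable {K : Type*} [Field K] [CharZero K]

lemma stmt9_eval_phi (y : MvPolynomial (Fin 1) K) (q : MvPolynomial (Fin 2) K) :
    Polynomial.eval y (finSuccEquiv K 1 q) =
      aeval (Fin.cases y (fun j => X j) : Fin 2 → MvPolynomial (Fin 1) K) q := by
  have h := MvPolynomial.ringHom_ext
    (f := (Polynomial.evalRingHom y).comp
      ((finSuccEquiv K 1 : MvPolynomial (Fin 2) K ≃+* Polynomial (MvPolynomial (Fin 1) K)) :
        MvPolynomial (Fin 2) K →+* Polynomial (MvPolynomial (Fin 1) K)))
    (g := (aeval (Fin.cases y (fun j => X j) : Fin 2 → MvPolynomial (Fin 1) K)).toRingHom)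
    (fun r => by simp [finSuccEquiv_apply])
    (fun i => by
      refine Fin.cases ?_ (fun j => ?_) i
      · simp [finSuccEquiv_X_zero]
      · simp [finSuccEquiv_X_succ])
  exact RingHom.congr_fun h q

end Stmt9Aux

theorem stmt_9 {K : Type*} [Field K] [CharZero K]
    (w : Fin 2 → MvPolynomial (Fin 2) K)
    (hker : X 0 * w 0 + X 1 * w 1 = 0)
    (hinv : rename (Equiv.swap (0 : Fin 2) 1) (w 0) = w 1 ∧
            rename (Equiv.swap (0 : Fin 2) 1) (w 1) = w 0) :
    ∃ p : MvPolynomial (Fin 2) K, p.IsSymmetric ∧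
      w 0 = p * (X 1 * (X 0 - X 1)) ∧ w 1 = p * (-(X 0 * (X 0 - X 1))) := by
  obtain ⟨hinv1, hinv2⟩ := hinv
  have h10 : (1 : Fin 2) = Fin.succ 0 := rfl
  have hXne : (X 0 : MvPolynomial (Fin 1) K) ≠ 0 := X_ne_zero 0
  -- Step 1: X 0 ∣ w 1
  have hdvd1 : (X 0 : MvPolynomial (Fin 2) K) ∣ w 1 := by
    rw [← map_dvd_iff (finSuccEquiv K 1)]
    rw [finSuccEquiv_X_zero]
    have hXC : (Polynomial.X : Polynomial (MvPolynomial (Fin 1) K)) =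
        Polynomial.X - Polynomial.C 0 := by simp
    rw [hXC, Polynomial.dvd_iff_isRoot, Polynomial.IsRoot, stmt9_eval_phi]
    have h := congrArg (aeval (Fin.cases 0 (fun j => X j) : Fin 2 → MvPolynomial (Fin 1) K)) hker
    simp only [map_add, map_mul, aeval_X, map_zero, h10, Fin.cases_zero, Fin.cases_succ,
      zero_mul, zero_add] at h
    exact (mul_eq_zero.mp h).resolve_left hXne
  obtain ⟨q, hq⟩ := hdvd1
  -- Step 2: w 0 = -(X 1 * q)
  have hX0ne : (X 0 : MvPolynomial (Fin 2) K) ≠ 0 := X_ne_zero 0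
  have hX1ne : (X 1 : MvPolynomial (Fin 2) K) ≠ 0 := X_ne_zero 1
  have hw0 : w 0 = -(X 1 * q) := by
    have h2 : (X 0 : MvPolynomial (Fin 2) K) * (w 0 + X 1 * q) = 0 := by
      rw [hq] at hker; linear_combination hker
    have h3 := (mul_eq_zero.mp h2).resolve_left hX0ne
    linear_combination h3
  -- Step 3: antisymmetry of q
  have hanti : rename (Equiv.swap (0 : Fin 2) 1) q = -q := by
    have h4 : rename (Equiv.swap (0 : Fin 2) 1) (w 1) =
        X 1 * rename (Equiv.swap (0 : Fin 2) 1) q := by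
      rw [hq, map_mul, rename_X, Equiv.swap_apply_left]
    rw [hinv2, hw0] at h4
    have h5 : (X 1 : MvPolynomial (Fin 2) K) *
        (rename (Equiv.swap (0 : Fin 2) 1) q + q) = 0 := by linear_combination -h4
    have h6 := (mul_eq_zero.mp h5).resolve_left hX1ne
    linear_combination h6
  -- Step 4: the diagonal substitution kills q
  have hdiag : aeval (fun _ => X 0 : Fin 2 → MvPolynomial (Fin 1) K) q = 0 := by
    have h7 : aeval (fun _ => X 0 : Fin 2 → MvPolynomial (Fin 1) K)
        (rename (Equiv.swap (0 : Fin 2) 1) q) =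
        aeval (fun _ => X 0 : Fin 2 → MvPolynomial (Fin 1) K) q := by
      rw [aeval_rename]
      rfl
    rw [hanti, map_neg] at h7
    have h8 : (2 : MvPolynomial (Fin 1) K) *
        aeval (fun _ => X 0 : Fin 2 → MvPolynomial (Fin 1) K) q = 0 := by
      linear_combination -h7
    exact (mul_eq_zero.mp h8).resolve_left two_ne_zero
  -- Step 5: (X 0 - X 1) ∣ q
  have hdvd2 : (X 0 - X 1 : MvPolynomial (Fin 2) K) ∣ q := by
    rw [← map_dvd_iff (finSuccEquiv K 1)]
    rw [map_sub, finSuccEquiv_X_zero, h10, finSuccEquiv_X_succ,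
      Polynomial.dvd_iff_isRoot, Polynomial.IsRoot, stmt9_eval_phi]
    have hfun : (Fin.cases (X 0) (fun j => X j) : Fin 2 → MvPolynomial (Fin 1) K) =
        fun _ => X 0 := by
      funext i
      refine Fin.cases ?_ (fun j => ?_) i
      · rfl
      · rw [Fin.cases_succ, Subsingleton.elim j 0]
    rw [hfun, hdiag]
  obtain ⟨p', hp'⟩ := hdvd2
  -- Step 6: p' is symmetric
  have hsub_ne : (X 0 - X 1 : MvPolynomial (Fin 2) K) ≠ 0 :=
    sub_ne_zero.mpr (by simpa using X_injective.ne (show (0 : Fin 2) ≠ 1 by decide))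
  have hsymm : rename (Equiv.swap (0 : Fin 2) 1) p' = p' := by
    have h9 : rename (Equiv.swap (0 : Fin 2) 1) q =
        (X 1 - X 0) * rename (Equiv.swap (0 : Fin 2) 1) p' := by
      rw [hp', map_mul, map_sub, rename_X, rename_X, Equiv.swap_apply_left,
        Equiv.swap_apply_right]
    rw [hanti, hp'] at h9
    have h10' : (X 0 - X 1 : MvPolynomial (Fin 2) K) *
        (rename (Equiv.swap (0 : Fin 2) 1) p' - p') = 0 := by linear_combination h9
    have h11 := (mul_eq_zero.mp h10').resolve_left hsub_ne
    linear_combination h11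
  refine ⟨-p', ?_, ?_, ?_⟩
  · have key : ∀ e : Equiv.Perm (Fin 2), e = Equiv.refl (Fin 2) ∨ e = Equiv.swap 0 1 := by
      decide
    intro e
    have he := key e
    rcases he with he | he
    · subst he; simp [rename_id]
    · subst he; rw [map_neg, hsymm]
  · rw [hw0, hp']; ring
  · rw [hq, hp']; ring
end
end

section
/- Let W_n = ⊕_{i=1}^n K[x_1,…,x_n]·u_i be the free K[X_n]-module of rank n with the S_n-action permuting simultaneously the u_i and x_i, and let W' = {Σ u_i p_i(X_n) ∈ W_n : Σ_{i=1}^n x_i p_i(X_n) = 0}. Then the set of S_n-invariant elements of W' is generated as a module over K[X_n]^{S_n} by the elements h_{ij} = j·ε_i·e_j − i·ε_j·e_i for 1 ≤ i < j ≤ n, where ε_m = Σ_{i=1}^n u_i · e_{m-1}(x_1,…,\hat{x_i},…,x_n) and e_m is the m-th elementary symmetric polynomial. -/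
/-!
Write `ê_q(k) = e_q(x_1,…,x̂_k,…,x_n)` (`eo`). An invariant vector `w` is determined by `w_0`,
which is invariant under the stabiliser of `0`: it is a polynomial in `x_0` whose coefficients are
symmetric in the other variables, hence lies in `K[X_n]^{S_n}[x_0]`, and since
`x_0 ê_q(0) = e_{q+1} - ê_{q+1}(0)` this is the `K[X_n]^{S_n}`-span of the `ê_q(0)`. So
`w_k = ∑_q a_q ê_q(k)` with symmetric `a_q`, and `∑_k x_k ê_q(k) = (q+1) e_{q+1}` turns
`∑_k x_k w_k = 0` into the syzygy `∑_q e_{q+1} · (q+1) a_q = 0`. As `e_1,…,e_n` are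
algebraically independent, exactness of the Koszul complex of a sequence of variables (adjoin one
variable at a time) gives `(q+1) a_q = ∑_l e_{l+1} γ_{ql}` with `γ` an alternating matrix of
symmetric polynomials, and grouping the terms of `∑_q a_q ê_q(k)` in pairs `{q, l}` yields
`w = ∑_{i<j} γ_{i-1,j-1} / (i j) · h_{ij}`.
-/

noncomputable section
open MvPolynomial Finset

/-- `e_q(x_1,…,x̂_k,…,x_n)`, the `q`-th elementary symmetric polynomial omitting `x_k`. -/
def eo (K : Type*) [Field K] (n q : ℕ) (k : Fin n) : MvPolynomial (Fin n) K :=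
  ∑ S ∈ powersetCard q ((univ : Finset (Fin n)).erase k), ∏ t ∈ S, X t

/-- `e_q(X_n)`, the `q`-th elementary symmetric polynomial. -/
def el (K : Type*) [Field K] (n q : ℕ) : MvPolynomial (Fin n) K :=
  ∑ S ∈ powersetCard q (univ : Finset (Fin n)), ∏ t ∈ S, X t

/-- The coefficient of `u_k` in `h_{ij} = j·ε_i·e_j − i·ε_j·e_i`, where
`ε_m = Σ_i u_i e_{m-1}(x_1,…,x̂_i,…,x_n)`. -/
def hgen (K : Type*) [Field K] (n i j : ℕ) (k : Fin n) : MvPolynomial (Fin n) K :=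
  (j : MvPolynomial (Fin n) K) * eo K n (i - 1) k * el K n j -
  (i : MvPolynomial (Fin n) K) * eo K n (j - 1) k * el K n i

section ElementarySymmetric

variable {K : Type*} [Field K] {n : ℕ}

theorem el_eq_esymm (q : ℕ) : el K n q = esymm (Fin n) K q := rfl

@[simp]
theorem eo_zero (k : Fin n) : eo K n 0 k = 1 := by
  simp [eo]

theorem eo_eq_zero_of_le {q : ℕ} (k : Fin n) (h : n ≤ q) : eo K n q k = 0 := by
  rw [eo, powersetCard_eq_empty.2, sum_empty]
  rw [card_erase_of_mem (mem_univ k), card_univ, Fintype.card_fin]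
  have := k.isLt
  omega

theorem el_eq_zero_of_lt {q : ℕ} (h : n < q) : el K n q = 0 := by
  rw [el, powersetCard_eq_empty.2, sum_empty]
  simpa using h

theorem el_succ_eq (q : ℕ) (k : Fin n) :
    el K n (q + 1) = eo K n (q + 1) k + X k * eo K n q k := by
  have hk : k ∉ (univ : Finset (Fin n)).erase k := notMem_erase k _
  have hdisj : Disjoint (powersetCard (q + 1) ((univ : Finset (Fin n)).erase k))
      (image (insert k) (powersetCard q ((univ : Finset (Fin n)).erase k))) := by
    refine disjoint_left.2 fun S hS hS' => ?_
    obtain ⟨T, -, rfl⟩ := mem_image.1 hS'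
    exact hk ((mem_powersetCard.1 hS).1 (mem_insert_self k T))
  rw [el, ← insert_erase (mem_univ k), powersetCard_succ_insert hk, sum_union hdisj, eo, eo,
    mul_sum, sum_image]
  · refine congrArg _ (sum_congr rfl fun S hS => ?_)
    rw [prod_insert fun h => hk ((mem_powersetCard.1 hS).1 h)]
  · intro S hS T hT hST
    rw [← erase_insert (fun h => hk ((mem_powersetCard.1 hS).1 h)),
      ← erase_insert (fun h => hk ((mem_powersetCard.1 hT).1 h)), hST]

/-- Each `q`-subset avoids exactly `n - q` of the indices. -/
theorem sum_eo (q : ℕ) :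
    ∑ k : Fin n, eo K n q k = ((n - q : ℕ) : MvPolynomial (Fin n) K) * el K n q := by
  have herase : ∀ k : Fin n, powersetCard q ((univ : Finset (Fin n)).erase k)
      = (powersetCard q univ).filter (k ∉ ·) := fun k => by
    ext S
    simp only [mem_powersetCard, mem_filter, subset_erase, subset_univ, true_and]
    tauto
  simp_rw [eo, herase, sum_filter]
  rw [sum_comm, el, mul_sum]
  refine sum_congr rfl fun S hS => ?_
  rw [sum_ite, sum_const_zero, add_zero, sum_const, nsmul_eq_mul, filter_not,
    filter_mem_eq_inter, univ_inter, card_sdiff_of_subset (subset_univ S), card_univ,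
    Fintype.card_fin, (mem_powersetCard.1 hS).2]

theorem sum_X_mul_eo (q : ℕ) :
    ∑ k : Fin n, X k * eo K n q k =
      ((q + 1 : ℕ) : MvPolynomial (Fin n) K) * el K n (q + 1) := by
  simp_rw [fun k => eq_sub_of_add_eq' (el_succ_eq (K := K) q k).symm]
  rw [sum_sub_distrib, sum_const, sum_eo, card_univ, Fintype.card_fin, nsmul_eq_mul]
  rcases le_or_gt (q + 1) n with h | h
  · rw [Nat.cast_sub h]
    ring
  · rw [el_eq_zero_of_lt h]
    ring

theorem sum_X_mul_sum_mul_eo (a : Fin n → MvPolynomial (Fin n) K) :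
    ∑ k, X k * ∑ q : Fin n, a q * eo K n q k =
      ∑ q : Fin n, el K n (q + 1) * (((q : ℕ) + 1 : K) • a q) := by
  simp_rw [mul_sum]
  rw [sum_comm]
  refine sum_congr rfl fun q _ => ?_
  calc ∑ k, X k * (a q * eo K n q k) = a q * ∑ k, X k * eo K n q k := by
        rw [mul_sum]; exact sum_congr rfl fun k _ => by ring
    _ = _ := by rw [sum_X_mul_eo, smul_eq_C_mul, ← map_natCast C]; push_cast; ring

theorem rename_eo (σ : Equiv.Perm (Fin n)) (q : ℕ) (k : Fin n) :
    rename σ (eo K n q k) = eo K n q (σ k) := by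
  have hmap : (univ : Finset (Fin n)).erase (σ k) = (univ.erase k).map σ.toEmbedding := by
    rw [map_erase, map_univ_equiv]
    rfl
  rw [eo, map_sum, eo, hmap, powersetCard_map, sum_map]
  refine sum_congr rfl fun S _ => ?_
  simp [map_prod, Finset.prod_map]

theorem rename_succ_esymm {N : ℕ} (q : ℕ) :
    rename Fin.succ (esymm (Fin N) K q) = eo K (N + 1) q 0 := by
  have hmap : (univ : Finset (Fin (N + 1))).erase 0 = univ.map (Fin.succEmb N) := by
    ext x
    cases x using Fin.cases <;> simp [Fin.succ_ne_zero]
  rw [esymm, map_sum, eo, hmap, powersetCard_map, sum_map]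
  refine sum_congr rfl fun S _ => ?_
  simp [map_prod, Finset.prod_map]

end ElementarySymmetric

/-- Exactness of the Koszul complex of `x` in degree one: every syzygy of `x` is a combination
of the trivial syzygies `x_j e_i - x_i e_j`. -/
def SyzygiesAreKoszul {S ι : Type*} [CommRing S] [Fintype ι] (x : ι → S) : Prop :=
  ∀ a : ι → S, ∑ i, x i * a i = 0 →
    ∃ c : ι → ι → S, (∀ i, c i i = 0) ∧ (∀ i j, c i j = -c j i) ∧
      ∀ i, a i = ∑ j, x j * c i j

namespace SyzygiesAreKoszul

variable {S T : Type*} [CommRing S] [CommRing T]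

theorem of_isEmpty {ι : Type*} [Fintype ι] [IsEmpty ι] (x : ι → S) : SyzygiesAreKoszul x :=
  fun _ _ => ⟨fun _ _ => 0, isEmptyElim, isEmptyElim, isEmptyElim⟩

theorem map_ringEquiv {ι : Type*} [Fintype ι] {x : ι → S} (hx : SyzygiesAreKoszul x)
    (e : S ≃+* T) : SyzygiesAreKoszul (e ∘ x) := by
  intro a ha
  obtain ⟨c, hdiag, hanti, hc⟩ := hx (e.symm ∘ a) <| e.injective <| by
    simpa [map_sum, map_mul] using ha
  refine ⟨fun i j => e (c i j), fun i => by simp [hdiag], fun i j => by simp [hanti i j], ?_⟩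
  intro i
  simpa [map_sum, map_mul] using congrArg e (hc i)

/-- Split each `a (i+1)` as its constant term plus `Y * divX` and apply the hypothesis to the
constant terms; then `Y` cancels from the remaining relation for `a 0`. -/
theorem cons_X {N : ℕ} {x : Fin N → S} (hx : SyzygiesAreKoszul x) :
    SyzygiesAreKoszul
      (Fin.cons Polynomial.X (fun i => Polynomial.C (x i)) : Fin (N + 1) → Polynomial S) := by
  intro a ha
  simp only [Fin.sum_univ_succ, Fin.cons_zero, Fin.cons_succ] at ha
  have hconst : ∑ i, x i * (a i.succ).coeff 0 = 0 := by
    simpa [Polynomial.coeff_zero_eq_eval_zero, Polynomial.eval_finsetSum]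
      using congrArg (Polynomial.eval 0) ha
  obtain ⟨c, hdiag, hanti, hc⟩ := hx _ hconst
  have hsucc : ∀ i : Fin N, a i.succ =
      Polynomial.C ((a i.succ).coeff 0) + Polynomial.X * (a i.succ).divX := fun i => by
    rw [add_comm, Polynomial.X_mul_divX_add]
  have hzero : a 0 = -∑ i, Polynomial.C (x i) * (a i.succ).divX := by
    refine Polynomial.isRegular_X.left ?_
    have : ∑ i, Polynomial.C (x i) * a i.succ = Polynomial.C (∑ i, x i * (a i.succ).coeff 0)
        + Polynomial.X * ∑ i, Polynomial.C (x i) * (a i.succ).divX := by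
      conv_lhs => enter [2, i]; rw [hsucc i]
      simp only [map_sum, map_mul, mul_sum, ← sum_add_distrib]
      exact sum_congr rfl fun i _ => by ring
    show Polynomial.X * a 0 = Polynomial.X * _
    rw [eq_neg_of_add_eq_zero_left ha, this, hconst, map_zero, zero_add]
    ring
  refine ⟨Fin.cons (Fin.cons 0 fun j => -(a j.succ).divX)
    (fun i => Fin.cons (a i.succ).divX fun j => Polynomial.C (c i j)), ?_, ?_, ?_⟩
  · intro i
    cases i using Fin.cases <;> simp [hdiag]
  · intro i j
    cases i using Fin.cases <;> cases j using Fin.cases <;>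
      simp only [Fin.cons_zero, Fin.cons_succ, neg_zero, neg_neg]
    rw [hanti, map_neg]
  · intro i
    cases i using Fin.cases with
    | zero => simp [Fin.sum_univ_succ, hzero]
    | succ i =>
      conv_lhs => rw [hsucc i, hc i]
      simp [Fin.sum_univ_succ, map_sum]
      ring

end SyzygiesAreKoszul

theorem syzygiesAreKoszul_X (R : Type*) [CommRing R] (N : ℕ) :
    SyzygiesAreKoszul (X : Fin N → MvPolynomial (Fin N) R) := by
  induction N with
  | zero => exact .of_isEmpty _
  | succ N ih =>
    convert ih.cons_X.map_ringEquiv (finSuccEquiv R N).symm.toRingEquiv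
    funext i
    cases i using Fin.cases <;>
      simp [← finSuccEquiv_X_zero, ← finSuccEquiv_X_succ]

theorem syzygiesAreKoszul_esymm (σ R : Type*) [Fintype σ] [CommRing R] {n : ℕ}
    (hn : Fintype.card σ = n) :
    SyzygiesAreKoszul (fun i : Fin n =>
      (⟨esymm σ R (i + 1), esymm_isSymmetric σ R _⟩ : symmetricSubalgebra σ R)) := by
  convert (syzygiesAreKoszul_X R n).map_ringEquiv (esymmAlgEquiv σ R hn).toRingEquiv
  simp [esymmAlgHom]

section FinSuccEquiv

variable {R : Type*} [CommSemiring R] {N : ℕ}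

theorem finSuccEquiv_rename_succ (g : MvPolynomial (Fin N) R) :
    finSuccEquiv R N (rename Fin.succ g) = Polynomial.C g := by
  induction g using MvPolynomial.induction_on with
  | C a => simp [finSuccEquiv_apply]
  | add p q hp hq => simp [hp, hq]
  | mul_X p i hp => simp [hp, finSuccEquiv_X_succ]

theorem finSuccEquiv_rename_decomposeFin_symm (σ : Equiv.Perm (Fin N))
    (f : MvPolynomial (Fin (N + 1)) R) :
    finSuccEquiv R N (rename (Equiv.Perm.decomposeFin.symm (0, σ)) f) =
      Polynomial.map (rename σ).toRingHom (finSuccEquiv R N f) := by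
  induction f using MvPolynomial.induction_on with
  | C a => simp [finSuccEquiv_apply]
  | add p q hp hq => simp [hp, hq, Polynomial.map_add]
  | mul_X p i hp =>
    cases i using Fin.cases <;>
      simp [hp, Polynomial.map_mul, finSuccEquiv_X_zero, finSuccEquiv_X_succ,
        Equiv.Perm.decomposeFin_symm_apply_succ]

theorem eq_sum_rename_succ_mul_X_zero_pow (f : MvPolynomial (Fin (N + 1)) R) :
    f = ∑ d ∈ (finSuccEquiv R N f).support,
      rename Fin.succ ((finSuccEquiv R N f).coeff d) * X 0 ^ d := by
  apply (finSuccEquiv R N).injective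
  conv_lhs => rw [(finSuccEquiv R N f).as_sum_support_C_mul_X_pow]
  simp [finSuccEquiv_rename_succ, finSuccEquiv_X_zero]

end FinSuccEquiv

section StabilizerInvariants

variable {K : Type*} [Field K] {N : ℕ}

local notation "𝒮" => symmetricSubalgebra (Fin (N + 1)) K

theorem eo_zero_mem_adjoin (q : ℕ) :
    eo K (N + 1) q 0 ∈ Algebra.adjoin 𝒮 {(X 0 : MvPolynomial (Fin (N + 1)) K)} := by
  induction q with
  | zero => rw [eo_zero]; exact one_mem _
  | succ q ih =>
    rw [eq_sub_of_add_eq (el_succ_eq q 0).symm]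
    refine sub_mem ?_ (mul_mem (Algebra.self_mem_adjoin_singleton _ _) ih)
    exact Subalgebra.algebraMap_mem (Algebra.adjoin 𝒮 {(X 0 : MvPolynomial (Fin (N + 1)) K)})
      (⟨el K (N + 1) (q + 1), esymm_isSymmetric _ _ _⟩ : 𝒮)

theorem rename_succ_mem_adjoin {g : MvPolynomial (Fin N) K} (hg : g.IsSymmetric) :
    rename Fin.succ g ∈ Algebra.adjoin 𝒮 {(X 0 : MvPolynomial (Fin (N + 1)) K)} := by
  obtain ⟨Q, hQ⟩ :=
    esymmAlgHom_fin_surjective K le_rfl (⟨g, hg⟩ : symmetricSubalgebra (Fin N) K)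
  have hg : rename Fin.succ g = aeval (fun i : Fin N => eo K (N + 1) (i + 1) 0) Q := by
    have hQ' : aeval (fun i : Fin N => esymm (Fin N) K (i + 1)) Q = g := by
      simpa [esymmAlgHom_apply] using congrArg Subtype.val hQ
    rw [← hQ', ← AlgHom.comp_apply, comp_aeval]
    simp only [rename_succ_esymm]
  have hle : Algebra.adjoin K (Set.range fun i : Fin N => eo K (N + 1) (i + 1) 0) ≤
      (Algebra.adjoin 𝒮 {(X 0 : MvPolynomial (Fin (N + 1)) K)}).restrictScalars K :=
    Algebra.adjoin_le (Set.range_subset_iff.2 fun i => eo_zero_mem_adjoin _)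
  rw [hg]
  refine hle ?_
  rw [Algebra.adjoin_range_eq_range_aeval]
  exact ⟨Q, rfl⟩

theorem mem_adjoin_X_zero_of_rename_eq {f : MvPolynomial (Fin (N + 1)) K}
    (hf : ∀ σ : Equiv.Perm (Fin (N + 1)), σ 0 = 0 → rename σ f = f) :
    f ∈ Algebra.adjoin 𝒮 {(X 0 : MvPolynomial (Fin (N + 1)) K)} := by
  have hcoeff : ∀ d, ((finSuccEquiv K N f).coeff d).IsSymmetric := fun d σ => by
    have h := finSuccEquiv_rename_decomposeFin_symm σ f
    rw [hf _ (Equiv.Perm.decomposeFin_symm_apply_zero 0 σ)] at h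
    simpa using (congrArg (Polynomial.coeff · d) h).symm
  rw [eq_sum_rename_succ_mul_X_zero_pow f]
  exact sum_mem fun d _ => mul_mem (rename_succ_mem_adjoin (hcoeff d))
    (pow_mem (Algebra.self_mem_adjoin_singleton _ _) d)

theorem X_zero_mul_mem_span_eo {g : MvPolynomial (Fin (N + 1)) K}
    (hg : g ∈ Submodule.span 𝒮 (Set.range fun q : Fin (N + 1) => eo K (N + 1) q 0)) :
    X 0 * g ∈ Submodule.span 𝒮 (Set.range fun q : Fin (N + 1) => eo K (N + 1) q 0) := by
  induction hg using Submodule.span_induction with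
  | mem g hg =>
    obtain ⟨q, rfl⟩ := hg
    rw [eq_sub_of_add_eq' (el_succ_eq (q : ℕ) 0).symm]
    refine sub_mem ?_ ?_
    · have h1 : eo K (N + 1) ((0 : Fin (N + 1)) : ℕ) 0 ∈ Submodule.span 𝒮
          (Set.range fun q : Fin (N + 1) => eo K (N + 1) q 0) := Submodule.subset_span ⟨0, rfl⟩
      simpa [Subalgebra.smul_def] using
        Submodule.smul_mem _ (⟨el K (N + 1) (q + 1), esymm_isSymmetric _ _ _⟩ : 𝒮) h1
    · by_cases hq : (q : ℕ) + 1 < N + 1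
      · exact Submodule.subset_span ⟨⟨q + 1, hq⟩, rfl⟩
      · rw [eo_eq_zero_of_le 0 (not_lt.1 hq)]
        exact zero_mem _
  | zero => simp
  | add g h _ _ hg hh => rw [mul_add]; exact add_mem hg hh
  | smul s g _ hg => rw [mul_smul_comm]; exact Submodule.smul_mem _ s hg

theorem adjoin_X_zero_le_span_eo :
    (Algebra.adjoin 𝒮 {(X 0 : MvPolynomial (Fin (N + 1)) K)}).toSubmodule ≤
      Submodule.span 𝒮 (Set.range fun q : Fin (N + 1) => eo K (N + 1) q 0) := by
  rw [Algebra.adjoin_eq_span, Submodule.span_le]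
  intro _ hx
  obtain ⟨d, rfl⟩ := Submonoid.mem_closure_singleton.1 hx
  clear hx
  induction d with
  | zero =>
    rw [pow_zero, ← eo_zero (K := K) (0 : Fin (N + 1))]
    exact Submodule.subset_span ⟨0, rfl⟩
  | succ d ih => rw [pow_succ']; exact X_zero_mul_mem_span_eo ih

theorem exists_eq_sum_mul_eo {w : Fin (N + 1) → MvPolynomial (Fin (N + 1)) K}
    (hinv : ∀ σ : Equiv.Perm (Fin (N + 1)), ∀ k, rename σ (w (σ⁻¹ k)) = w k) :
    ∃ a : Fin (N + 1) → 𝒮,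
      ∀ k, w k = ∑ q, (a q : MvPolynomial (Fin (N + 1)) K) * eo K (N + 1) q k := by
  have hstab : ∀ σ : Equiv.Perm (Fin (N + 1)), σ 0 = 0 → rename σ (w 0) = w 0 :=
    fun σ hσ => by simpa [Equiv.Perm.inv_eq_iff_eq.2 hσ.symm] using hinv σ 0
  obtain ⟨a, ha⟩ := (Submodule.mem_span_range_iff_exists_fun 𝒮).1 <|
    adjoin_X_zero_le_span_eo (mem_adjoin_X_zero_of_rename_eq hstab)
  refine ⟨a, fun k => ?_⟩
  have hk := hinv (Equiv.swap 0 k) k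
  rw [Equiv.swap_inv, Equiv.swap_apply_right] at hk
  rw [← hk, ← ha, map_sum]
  refine sum_congr rfl fun q _ => ?_
  rw [Subalgebra.smul_def, smul_eq_mul, map_mul, (mem_symmetricSubalgebra _).1 (a q).2, rename_eo,
    Equiv.swap_apply_left]

end StabilizerInvariants

section Regrouping

theorem sum_sum_mul_eq_sum_sum_lt {ι R : Type*} [Fintype ι] [LinearOrder ι] [CommRing R]
    {γ : ι → ι → R} (hdiag : ∀ i, γ i i = 0) (hanti : ∀ i j, γ i j = -γ j i)
    (u v : ι → R) :
    ∑ i, ∑ j, γ i j * u i * v j =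
      ∑ i, ∑ j, if i < j then γ i j * (u i * v j - u j * v i) else 0 := by
  calc ∑ i, ∑ j, γ i j * u i * v j
      = ∑ i, ∑ j, ((if i < j then γ i j * u i * v j else 0) +
          if j < i then γ i j * u i * v j else 0) := by
        refine sum_congr rfl fun i _ => sum_congr rfl fun j _ => ?_
        rcases lt_trichotomy i j with h | rfl | h
        · simp [h, h.not_gt]
        · simp [hdiag]
        · simp [h, h.not_gt]
    _ = ∑ i, ∑ j, ((if i < j then γ i j * u i * v j else 0) +
          if i < j then γ j i * u j * v i else 0) := by
        simp only [sum_add_distrib]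
        rw [sum_comm (f := fun i j => if j < i then γ i j * u i * v j else 0)]
    _ = _ := by
        refine sum_congr rfl fun i _ => sum_congr rfl fun j _ => ?_
        split_ifs
        · rw [hanti j i]; ring
        · simp

theorem sum_Icc_one_eq_sum_fin {M : Type*} [AddCommMonoid M] (n : ℕ) (f : ℕ → M) :
    ∑ i ∈ Icc 1 n, f i = ∑ i : Fin n, f (i + 1) := by
  rw [Fin.sum_univ_eq_sum_range (fun i => f (i + 1)), ← Ico_add_one_right_eq_Icc,
    sum_Ico_eq_sum_range]
  simp [add_comm]

variable {K : Type*} [Field K]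

theorem inv_smul_hgen {n i j : ℕ} (hi : (i : K) ≠ 0) (hj : (j : K) ≠ 0) (k : Fin n) :
    ((i : K) * j)⁻¹ • hgen K n i j k =
      ((i : K)⁻¹ • eo K n (i - 1) k) * el K n j -
        ((j : K)⁻¹ • eo K n (j - 1) k) * el K n i := by
  have hi' : C (i : K)⁻¹ * C (i : K) = (1 : MvPolynomial (Fin n) K) := by
    rw [← map_mul, inv_mul_cancel₀ hi, map_one]
  have hj' : C (j : K)⁻¹ * C (j : K) = (1 : MvPolynomial (Fin n) K) := by
    rw [← map_mul, inv_mul_cancel₀ hj, map_one]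
  simp only [hgen, smul_eq_C_mul, ← map_natCast (C : K →+* MvPolynomial (Fin n) K), mul_inv,
    map_mul]
  linear_combination (C (i : K)⁻¹ * eo K n (i - 1) k * el K n j) * hj' -
    (C (j : K)⁻¹ * eo K n (j - 1) k * el K n i) * hi'

theorem sum_mul_eo_eq_sum_Icc_hgen [CharZero K] {N : ℕ}
    {a : Fin (N + 1) → MvPolynomial (Fin (N + 1)) K}
    {γ : Fin (N + 1) → Fin (N + 1) → MvPolynomial (Fin (N + 1)) K} (hdiag : ∀ q, γ q q = 0)
    (hanti : ∀ q l, γ q l = -γ l q)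
    (ha : ∀ q : Fin (N + 1),
      ((q : ℕ) + 1 : K) • a q = ∑ l : Fin (N + 1), el K (N + 1) (l + 1) * γ q l)
    (k : Fin (N + 1)) :
    ∑ q, a q * eo K (N + 1) q k = ∑ i ∈ Icc 1 (N + 1), ∑ j ∈ Icc 1 (N + 1),
      if i < j then ((i : K) * j)⁻¹ • γ (Fin.ofNat _ (i - 1)) (Fin.ofNat _ (j - 1)) *
        hgen K (N + 1) i j k else 0 := by
  have ha' : ∀ q : Fin (N + 1),
      a q = ((q : ℕ) + 1 : K)⁻¹ • ∑ l : Fin (N + 1), el K (N + 1) (l + 1) * γ q l :=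
    fun q => by rw [eq_inv_smul_iff₀ (Nat.cast_add_one_ne_zero _), ha]
  simp_rw [sum_Icc_one_eq_sum_fin]
  calc ∑ q, a q * eo K (N + 1) q k
      = ∑ q, ∑ l,
          γ q l * (((q : ℕ) + 1 : K)⁻¹ • eo K (N + 1) q k) * el K (N + 1) (l + 1) := by
        refine sum_congr rfl fun q _ => ?_
        rw [ha' q, smul_mul_assoc, sum_mul, smul_sum]
        refine sum_congr rfl fun l _ => ?_
        rw [mul_smul_comm, smul_mul_assoc, mul_comm (el K (N + 1) _), mul_right_comm]
    _ = ∑ q, ∑ l, if q < l then γ q l *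
        (((q : ℕ) + 1 : K)⁻¹ • eo K (N + 1) q k * el K (N + 1) (l + 1) -
          ((l : ℕ) + 1 : K)⁻¹ • eo K (N + 1) l k * el K (N + 1) (q + 1)) else 0 :=
        sum_sum_mul_eq_sum_sum_lt hdiag hanti _ _
    _ = _ := by
        refine sum_congr rfl fun q _ => sum_congr rfl fun l _ => ?_
        simp only [add_lt_add_iff_right, Fin.val_fin_lt]
        split_ifs
        · conv_rhs => rw [smul_mul_assoc, ← mul_smul_comm,
            inv_smul_hgen (Nat.cast_ne_zero.2 q.val.succ_ne_zero)
              (Nat.cast_ne_zero.2 l.val.succ_ne_zero)]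
          simp
        · rfl

end Regrouping

theorem stmt_10_general {K : Type*} [Field K] [CharZero K] {n : ℕ}
    (w : Fin n → MvPolynomial (Fin n) K)
    (hker : ∑ i : Fin n, X i * w i = 0)
    (hinv : ∀ σ : Equiv.Perm (Fin n), ∀ k : Fin n, rename σ (w (σ⁻¹ k)) = w k) :
    ∃ p : ℕ → ℕ → MvPolynomial (Fin n) K,
      (∀ i j, (p i j).IsSymmetric) ∧
      ∀ k : Fin n, w k = ∑ i ∈ Finset.Icc 1 n, ∑ j ∈ Finset.Icc 1 n,
        if i < j then p i j * hgen K n i j k else 0 := by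
  rcases n with _ | N
  · exact ⟨0, fun _ _ => .zero, fun k => k.elim0⟩
  obtain ⟨a, hw⟩ := exists_eq_sum_mul_eo hinv
  have hrel : ∑ q : Fin (N + 1), (⟨esymm _ K (q + 1), esymm_isSymmetric _ _ _⟩ :
      symmetricSubalgebra (Fin (N + 1)) K) * (((q : ℕ) + 1 : K) • a q) = 0 :=
    Subtype.ext (by simpa [hw, sum_X_mul_sum_mul_eo, el_eq_esymm] using hker)
  obtain ⟨γ, hdiag, hanti, hγ⟩ :=
    syzygiesAreKoszul_esymm (Fin (N + 1)) K (Fintype.card_fin _) _ hrel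
  refine ⟨fun i j => ((i : K) * j)⁻¹ • (γ (Fin.ofNat _ (i - 1)) (Fin.ofNat _ (j - 1)) :
      MvPolynomial (Fin (N + 1)) K), fun i j => ((mem_symmetricSubalgebra _).1 (γ _ _).2).smul _,
    fun k => ?_⟩
  rw [hw k]
  exact sum_mul_eo_eq_sum_Icc_hgen (γ := fun q l => (γ q l : MvPolynomial (Fin (N + 1)) K))
    (fun q => by simp [hdiag]) (fun q l => by simp [hanti q l])
    (fun q => by simpa [el_eq_esymm] using congrArg Subtype.val (hγ q)) k

theorem stmt_10 {K : Type*} [Field K] [CharZero K] {n : ℕ} (hn : 2 ≤ n)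
    (w : Fin n → MvPolynomial (Fin n) K)
    (hker : ∑ i : Fin n, X i * w i = 0)
    (hinv : ∀ σ : Equiv.Perm (Fin n), ∀ k : Fin n, rename σ (w (σ⁻¹ k)) = w k) :
    ∃ p : ℕ → ℕ → MvPolynomial (Fin n) K,
      (∀ i j, (p i j).IsSymmetric) ∧
      ∀ k : Fin n, w k = ∑ i ∈ Finset.Icc 1 n, ∑ j ∈ Finset.Icc 1 n,
        if i < j then p i j * hgen K n i j k else 0 :=
  stmt_10_general w hker hinv
end
end

section
/- Let K be a field of characteristic zero and suppose f = Σ_{j=1}^n ε_j(U_n,X_n)·r_j(X_n) with each r_j ∈ K[X_n]^{S_n} satisfies f(X_n, X_n) = 0 (substituting u_i = x_i). Writing each r_j in terms of the elementary symmetric polynomials, if r_j = Σ_a α_{a,j} e_1^{a_1}⋯e_j^{a_j − 1}⋯e_n^{a_n}, then for every fixed exponent vector a = (a_1,…,a_n) the coefficients satisfy Σ_{j=1}^n j·α_{a,j} = 0. -/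
noncomputable section
open MvPolynomial Finset

/-- `ε_{q+1}(U_n, X_n) = Σ_i u_i · e_q(x_1,…,x̂_i,…,x_n)` in `K[U_n, X_n]`. -/
def eps (K : Type*) [Field K] (n q : ℕ) : MvPolynomial (Fin n ⊕ Fin n) K :=
  ∑ i : Fin n, X (Sum.inl i) *
    ∑ S ∈ powersetCard q ((univ : Finset (Fin n)).erase i), ∏ t ∈ S, X (Sum.inr t)

/-- `e_q(X_n)`, the `q`-th elementary symmetric polynomial in the `x`-variables. -/
def ee (K : Type*) [Field K] (n q : ℕ) : MvPolynomial (Fin n ⊕ Fin n) K :=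
  ∑ S ∈ powersetCard q (univ : Finset (Fin n)), ∏ t ∈ S, X (Sum.inr t)

/-! Substituting `u = x` turns `ε_{j+1}` into `(j + 1) e_{j+1}`, so the hypothesis says that
`∑_a (∑_j (j + 1) α_{a,j}) e^a = 0`. Since `e_1, …, e_n` are algebraically independent (the
fundamental theorem of symmetric polynomials), each coefficient `∑_j (j + 1) α_{a,j}` vanishes. -/

namespace Finset

variable {ι R : Type*} [DecidableEq ι] [CommSemiring R]

theorem mul_sum_powersetCard_erase (f : ι → R) {s : Finset ι} {i : ι} (hi : i ∈ s) (q : ℕ) :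
    f i * ∑ S ∈ powersetCard q (s.erase i), ∏ t ∈ S, f t
      = ∑ T ∈ powersetCard (q + 1) s with i ∈ T, ∏ t ∈ T, f t := by
  rw [mul_sum]
  refine sum_nbij' (insert i) (·.erase i) (fun S hS => ?_) (fun T hT => ?_) (fun S hS => ?_)
    (fun T hT => ?_) (fun S hS => ?_) <;>
    simp only [mem_powersetCard, mem_filter, subset_erase] at *
  · exact ⟨⟨insert_subset hi hS.1.1, by rw [card_insert_of_notMem hS.1.2, hS.2]⟩,
      mem_insert_self _ _⟩
  · exact ⟨⟨(erase_subset _ _).trans hT.1.1, notMem_erase _ _⟩,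
      by rw [card_erase_of_mem hT.2, hT.1.2, Nat.add_sub_cancel]⟩
  · exact erase_insert hS.1.2
  · exact insert_erase hT.2
  · rw [prod_insert hS.1.2]

-- Each `(q + 1)`-subset `T` is `insert i S` for exactly `#T = q + 1` choices of `i`.
theorem sum_mul_sum_powersetCard_erase (f : ι → R) (s : Finset ι) (q : ℕ) :
    ∑ i ∈ s, f i * ∑ S ∈ powersetCard q (s.erase i), ∏ t ∈ S, f t
      = (q + 1) • ∑ T ∈ powersetCard (q + 1) s, ∏ t ∈ T, f t := by
  simp only [sum_congr rfl fun i hi => mul_sum_powersetCard_erase f hi q, sum_filter]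
  rw [sum_comm, smul_sum]
  refine sum_congr rfl fun T hT => ?_
  obtain ⟨hTs, hTcard⟩ := mem_powersetCard.1 hT
  rw [sum_ite_mem, inter_eq_right.2 hTs, sum_const, hTcard]

theorem mul_prod_pow_ite_sub_one [Fintype ι] {M : Type*} [CommMonoid M]
    (g : ι → M) {a : ι → ℕ} {j : ι} (hj : 1 ≤ a j) :
    g j * ∏ k, g k ^ (if k = j then a k - 1 else a k) = ∏ k, g k ^ a k := by
  rw [← mul_prod_erase univ _ (mem_univ j),
    ← mul_prod_erase univ (fun k => g k ^ a k) (mem_univ j), if_pos rfl, ← mul_assoc,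
    ← pow_succ', Nat.sub_add_cancel hj]
  congr 1
  exact prod_congr rfl fun k hk => by rw [if_neg (ne_of_mem_erase hk)]

end Finset

theorem MvPolynomial.coeff_eq_zero_of_sum_monomial_eq_zero {σ R : Type*} [Finite σ]
    [CommSemiring R]
    {A : Finset (σ → ℕ)} {c : (σ → ℕ) → R}
    (h : ∑ b ∈ A, monomial (Finsupp.equivFunOnFinite.symm b) (c b) = 0) {a : σ → ℕ} (ha : a ∈ A) :
    c a = 0 := by
  classical
  have := congrArg (coeff (Finsupp.equivFunOnFinite.symm a)) h
  rwa [coeff_sum, sum_eq_single_of_mem a ha fun b _ hb => ?_, coeff_monomial, if_pos rfl] at this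
  rw [coeff_monomial, if_neg (Finsupp.equivFunOnFinite.symm.injective.ne hb)]

section

variable (K : Type*) [Field K] (n : ℕ)

theorem ee_eq_rename_esymm (q : ℕ) : ee K n q = rename Sum.inr (esymm (Fin n) K q) := by
  simp [ee, esymm, map_sum]

theorem rename_diag_ee (q : ℕ) :
    rename (Sum.elim Sum.inr Sum.inr : Fin n ⊕ Fin n → Fin n ⊕ Fin n) (ee K n q) = ee K n q := by
  rw [ee_eq_rename_esymm, rename_rename]
  rfl

theorem rename_diag_eps (q : ℕ) :
    rename (Sum.elim Sum.inr Sum.inr : Fin n ⊕ Fin n → Fin n ⊕ Fin n) (eps K n q)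
      = (q + 1) • ee K n (q + 1) := by
  simp only [eps, ee, map_sum, map_mul, map_prod, rename_X, Sum.elim_inl, Sum.elim_inr]
  exact sum_mul_sum_powersetCard_erase _ _ q

theorem aeval_ee_injective :
    Function.Injective (aeval (R := K) fun k : Fin n => ee K n (k + 1)) := by
  have : (aeval (R := K) fun k : Fin n => ee K n (k + 1)) =
      (rename Sum.inr).comp
        ((symmetricSubalgebra (Fin n) K).val.comp (esymmAlgHom (Fin n) K n)) := by
    ext k
    simp [esymmAlgHom, ee_eq_rename_esymm]
  rw [this]
  exact (rename_injective _ Sum.inr_injective).comp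
    (Subtype.val_injective.comp (esymmAlgHom_injective K (Fintype.card_fin n).ge))

end

theorem rename_diag_eps_mul (K : Type*) [Field K] {n : ℕ} {a : Fin n → ℕ} {j : Fin n} {c : K}
    (h : c ≠ 0 → 1 ≤ a j) :
    rename (Sum.elim Sum.inr Sum.inr : Fin n ⊕ Fin n → Fin n ⊕ Fin n)
        (eps K n j * (C c * ∏ k : Fin n, ee K n (k + 1) ^ (if k = j then a k - 1 else a k)))
      = C (((j : ℕ) + 1 : K) * c) * ∏ k : Fin n, ee K n (k + 1) ^ a k := by
  rcases eq_or_ne c 0 with rfl | hc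
  · simp
  calc _ = ((j : ℕ) + 1) • ee K n (j + 1) *
          (C c * ∏ k : Fin n, ee K n (k + 1) ^ (if k = j then a k - 1 else a k)) := by
        simp only [map_mul, map_prod, map_pow, rename_C, rename_diag_eps, rename_diag_ee]
    _ = C (((j : ℕ) + 1 : K) * c) *
          (ee K n (j + 1) * ∏ k : Fin n, ee K n (k + 1) ^ (if k = j then a k - 1 else a k)) := by
        rw [nsmul_eq_mul, C_mul, map_add, map_natCast, map_one, Nat.cast_add, Nat.cast_one]
        ring
    _ = _ := by rw [mul_prod_pow_ite_sub_one (fun k : Fin n => ee K n (k + 1)) (h hc)]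

theorem stmt_16_general {K : Type*} [Field K] {n : ℕ}
    (A : Finset (Fin n → ℕ)) (α : (Fin n → ℕ) → Fin n → K)
    (hα : ∀ a ∈ A, ∀ j : Fin n, α a j ≠ 0 → 1 ≤ a j)
    (r : Fin n → MvPolynomial (Fin n ⊕ Fin n) K)
    (hr : ∀ j : Fin n, r j = ∑ a ∈ A, C (α a j) *
      ∏ k : Fin n, (ee K n ((k : ℕ) + 1)) ^ (if k = j then a k - 1 else a k))
    (hzero : rename (Sum.elim Sum.inr Sum.inr : Fin n ⊕ Fin n → Fin n ⊕ Fin n)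
      (∑ j : Fin n, eps K n (j : ℕ) * r j) = 0) :
    ∀ a ∈ A, ∑ j : Fin n, (((j : ℕ) + 1 : K)) * α a j = 0 := by
  intro a ha
  refine coeff_eq_zero_of_sum_monomial_eq_zero
    (c := fun b => ∑ j : Fin n, ((j : ℕ) + 1 : K) * α b j) (aeval_ee_injective K n ?_) ha
  rw [map_zero, ← hzero, map_sum, map_sum]
  -- both sides expand to `∑ j, ∑ b ∈ A, C ((j + 1) * α b j) * ∏ k, e_{k+1} ^ b k`
  simp only [hr, mul_sum, map_sum]
  rw [sum_comm]
  refine sum_congr rfl fun j _ => sum_congr rfl fun b hb => ?_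
  rw [rename_diag_eps_mul K (hα b hb j), aeval_monomial, algebraMap_eq,
    Finsupp.prod_fintype _ _ fun k => pow_zero _]
  rfl

theorem stmt_16 {K : Type*} [Field K] [CharZero K] {n : ℕ}
    (A : Finset (Fin n → ℕ)) (α : (Fin n → ℕ) → Fin n → K)
    (hα : ∀ a ∈ A, ∀ j : Fin n, α a j ≠ 0 → 1 ≤ a j)
    (r : Fin n → MvPolynomial (Fin n ⊕ Fin n) K)
    (hr : ∀ j : Fin n, r j = ∑ a ∈ A, C (α a j) *
      ∏ k : Fin n, (ee K n ((k : ℕ) + 1)) ^ (if k = j then a k - 1 else a k))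
    (hzero : rename (Sum.elim Sum.inr Sum.inr : Fin n ⊕ Fin n → Fin n ⊕ Fin n)
      (∑ j : Fin n, eps K n (j : ℕ) * r j) = 0) :
    ∀ a ∈ A, ∑ j : Fin n, (((j : ℕ) + 1 : K)) * α a j = 0 :=
  stmt_16_general A α hα r hr hzero
end
end
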